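/- Every proper orthochronous Lorentz matrix L can be decomposed as L = (1 ⊕ V) · B(α) · (1 ⊕ W), where V and W are real orthogonal 3×3 matrices of determinant 1, 1 ⊕ V denotes the block-diagonal 4×4 matrix with blocks 1 and V, α ∈ ℝ, and B(α) is the 4×4 matrix whose top-left 2×2 block is [[cosh α, sinh α],[sinh α, cosh α]] and whose bottom-right 2×2 block is the identity (all other entries zero). -/

import Mathlib

open Matrix

noncomputable section

/-- The Minkowski metric η = diag(1,-1,-1,-1). -/
def η : Matrix (Fin 4) (Fin 4) ℝ := Matrix.diagonal ![1, -1, -1, -1]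

/-- A proper orthochronous Lorentz matrix. -/
def LorentzPO (L : Matrix (Fin 4) (Fin 4) ℝ) : Prop :=
  Lᵀ * η * L = η ∧ L.det = 1 ∧ 1 ≤ L 0 0

/-- The block-diagonal 4×4 matrix `1 ⊕ V` with blocks `1` (1×1) and `V` (3×3). -/
def oplusOne (V : Matrix (Fin 3) (Fin 3) ℝ) : Matrix (Fin 4) (Fin 4) ℝ :=
  Matrix.reindex finSumFinEquiv finSumFinEquiv
    (Matrix.fromBlocks (1 : Matrix (Fin 1) (Fin 1) ℝ) 0 0 V)

/-- The standard boost `B(α)` in the (0,1)-plane. -/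
def boost (α : ℝ) : Matrix (Fin 4) (Fin 4) ℝ :=
  !![Real.cosh α, Real.sinh α, 0, 0;
     Real.sinh α, Real.cosh α, 0, 0;
     0, 0, 1, 0;
     0, 0, 0, 1]

/-! ### Auxiliary lemmas -/

lemma symm_succ (i : Fin 3) : (finSumFinEquiv.symm (i.succ : Fin 4) : Fin 1 ⊕ Fin 3) = Sum.inr i := by
  rw [Equiv.symm_apply_eq, finSumFinEquiv_apply_right]
  ext
  simp [Nat.add_comm]

lemma symm_zero : (finSumFinEquiv.symm (0 : Fin 4) : Fin 1 ⊕ Fin 3) = Sum.inl 0 := by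
  rw [Equiv.symm_apply_eq, finSumFinEquiv_apply_left]
  rfl

lemma oplusOne_succ_succ (V : Matrix (Fin 3) (Fin 3) ℝ) (i j : Fin 3) :
    oplusOne V i.succ j.succ = V i j := by
  simp [oplusOne, symm_succ]

lemma oplusOne_zero_zero (V : Matrix (Fin 3) (Fin 3) ℝ) : oplusOne V 0 0 = 1 := by
  simp [oplusOne, symm_zero, Matrix.one_apply]

lemma oplusOne_zero_succ (V : Matrix (Fin 3) (Fin 3) ℝ) (j : Fin 3) : oplusOne V 0 j.succ = 0 := by
  simp [oplusOne, symm_zero, symm_succ]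

lemma oplusOne_succ_zero (V : Matrix (Fin 3) (Fin 3) ℝ) (i : Fin 3) : oplusOne V i.succ 0 = 0 := by
  simp [oplusOne, symm_zero, symm_succ]

lemma oplusOne_mul (A B : Matrix (Fin 3) (Fin 3) ℝ) :
    oplusOne A * oplusOne B = oplusOne (A * B) := by
  simp only [oplusOne, Matrix.reindex_apply, Matrix.submatrix_mul_equiv,
    Matrix.fromBlocks_multiply]
  simp

lemma oplusOne_transpose (A : Matrix (Fin 3) (Fin 3) ℝ) : (oplusOne A)ᵀ = oplusOne Aᵀ := by
  simp only [oplusOne, Matrix.reindex_apply, Matrix.transpose_submatrix,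
    Matrix.fromBlocks_transpose]
  simp

lemma oplusOne_one : oplusOne 1 = 1 := by
  simp only [oplusOne, Matrix.fromBlocks_one, Matrix.reindex_apply, Matrix.submatrix_one_equiv]

lemma oplusOne_det (A : Matrix (Fin 3) (Fin 3) ℝ) : (oplusOne A).det = A.det := by
  simp [oplusOne, Matrix.det_fromBlocks_zero₂₁]

lemma oplusOne_inj {A B : Matrix (Fin 3) (Fin 3) ℝ} (h : oplusOne A = oplusOne B) : A = B := by
  ext i j
  have := congrFun (congrFun h i.succ) j.succ
  rwa [oplusOne_succ_succ, oplusOne_succ_succ] at this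

lemma η_eq : η = oplusOne (-1) := by
  ext i j
  induction i using Fin.cases with
  | zero =>
    induction j using Fin.cases with
    | zero => rw [oplusOne_zero_zero]; rfl
    | succ j =>
      rw [oplusOne_zero_succ, η, Matrix.diagonal_apply_ne _ (Fin.succ_ne_zero j).symm]
  | succ i =>
    induction j using Fin.cases with
    | zero => rw [oplusOne_succ_zero, η, Matrix.diagonal_apply_ne _ (Fin.succ_ne_zero i)]
    | succ j =>
      rw [oplusOne_succ_succ]
      rcases eq_or_ne i j with rfl | hij
      · rw [η, Matrix.diagonal_apply_eq]
        simp only [Matrix.neg_apply, Matrix.one_apply_eq]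
        fin_cases i <;> norm_num <;> rfl
      · rw [η, Matrix.diagonal_apply_ne _ (by simpa using hij), Matrix.neg_apply,
          Matrix.one_apply_ne hij, neg_zero]

lemma boost_mul (α β : ℝ) : boost α * boost β = boost (α + β) := by
  ext i j
  fin_cases i <;> fin_cases j <;>
    simp [boost, Matrix.mul_apply, Fin.sum_univ_succ, Matrix.vecHead, Matrix.vecTail,
      Real.cosh_add, Real.sinh_add] <;> ring

lemma boost_zero : boost 0 = 1 := by
  ext i j
  fin_cases i <;> fin_cases j <;> simp [boost, Matrix.one_apply] <;> rfl

lemma boost_transpose (α : ℝ) : (boost α)ᵀ = boost α := by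
  ext i j
  fin_cases i <;> fin_cases j <;> rfl

lemma eta_mul_boost (α : ℝ) : η * boost α =
    !![Real.cosh α, Real.sinh α, 0, 0;
       -Real.sinh α, -Real.cosh α, 0, 0;
       0, 0, -1, 0;
       0, 0, 0, -1] := by
  ext i j
  rw [η, Matrix.diagonal_mul]
  fin_cases i <;> fin_cases j <;> simp [boost, Matrix.vecHead, Matrix.vecTail, Function.comp]

lemma boost_lorentz (α : ℝ) : (boost α)ᵀ * η * boost α = η := by
  have h := Real.cosh_sq_sub_sinh_sq α
  rw [boost_transpose, mul_assoc, eta_mul_boost]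
  ext i j
  fin_cases i <;> fin_cases j <;>
    simp [boost, η, Matrix.mul_apply, Fin.sum_univ_succ, Matrix.vecHead, Matrix.vecTail,
      Matrix.diagonal_apply] <;> nlinarith [h]

lemma boost_det (α : ℝ) : (boost α).det = 1 := by
  have h := Real.cosh_sq_sub_sinh_sq α
  simp [boost, Matrix.det_succ_row_zero, Fin.sum_univ_succ, Fin.succAbove, Matrix.vecHead,
    Matrix.vecTail]
  nlinarith [h]

lemma lorentz_mul {A B : Matrix (Fin 4) (Fin 4) ℝ} (hA : Aᵀ * η * A = η)
    (hB : Bᵀ * η * B = η) : (A * B)ᵀ * η * (A * B) = η := by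
  calc (A * B)ᵀ * η * (A * B) = Bᵀ * ((Aᵀ * η * A) * B) := by
        rw [Matrix.transpose_mul]; simp only [mul_assoc]
    _ = η := by rw [hA, ← mul_assoc, hB]

lemma oplusOne_lorentz {V : Matrix (Fin 3) (Fin 3) ℝ} (h : V * Vᵀ = 1) :
    (oplusOne Vᵀ)ᵀ * η * oplusOne Vᵀ = η := by
  rw [oplusOne_transpose, Matrix.transpose_transpose, η_eq, oplusOne_mul, oplusOne_mul]
  congr 1
  rw [mul_neg_one, Matrix.neg_mul, h]

lemma exists_so3_col (u : Fin 3 → ℝ) (hu : u 0 ^ 2 + u 1 ^ 2 + u 2 ^ 2 = 1) :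
    ∃ V : Matrix (Fin 3) (Fin 3) ℝ, Vᵀ * V = 1 ∧ V.det = 1 ∧ ∀ i, V i 0 = u i := by
  classical
  set E := EuclideanSpace ℝ (Fin 3)
  let u' : E := WithLp.toLp 2 u
  have hnorm : ‖u'‖ = 1 := by
    rw [EuclideanSpace.norm_eq]
    have : ∑ i : Fin 3, ‖u' i‖ ^ 2 = 1 := by
      simp only [Real.norm_eq_abs, sq_abs, Fin.sum_univ_three]
      exact hu
    rw [this, Real.sqrt_one]
  have hortho : Orthonormal ℝ (({0} : Set (Fin 3)).restrict (fun _ : Fin 3 => u')) := by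
    rw [orthonormal_iff_ite]
    rintro ⟨i, hi⟩ ⟨j, hj⟩
    simp only [Set.mem_singleton_iff] at hi hj
    subst hi; subst hj
    simp only [Set.restrict_apply, if_pos rfl]
    rw [real_inner_self_eq_norm_sq, show ({0} : Set (Fin 3)).restrict (fun _ : Fin 3 => u') ⟨0, hi⟩ = u' from rfl, hnorm]
    norm_num
  obtain ⟨b, hb⟩ := hortho.exists_orthonormalBasis_extension_of_card_eq
    (by simp [E, finrank_euclideanSpace])
  have hb0 : ∀ i, b 0 i = u i := fun i => by
    have := hb 0 (Set.mem_singleton 0)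
    exact congrFun (congrArg (fun x : E => (x : Fin 3 → ℝ)) this) i
  let V' : Matrix (Fin 3) (Fin 3) ℝ := Matrix.of fun i j => b j i
  have hV' : V'ᵀ * V' = 1 := by
    ext i j
    have h2 := orthonormal_iff_ite.mp b.orthonormal i j
    rw [PiLp.inner_apply] at h2
    simp only [RCLike.inner_apply, starRingEnd_apply, star_trivial] at h2
    calc (V'ᵀ * V') i j = ∑ k, b i k * b j k := by
          simp [Matrix.mul_apply, V', Matrix.transpose_apply]
      _ = if i = j then 1 else 0 := by rw [← h2]; exact Finset.sum_congr rfl (fun k _ => mul_comm _ _)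
      _ = (1 : Matrix (Fin 3) (Fin 3) ℝ) i j := (Matrix.one_apply).symm
  have hdet2 : V'.det * V'.det = 1 := by
    have h1 : (V'ᵀ * V').det = 1 := by rw [hV']; simp
    rwa [Matrix.det_mul, Matrix.det_transpose] at h1
  set d := V'.det with hd
  refine ⟨V' * Matrix.diagonal ![1, 1, d], ?_, ?_, ?_⟩
  · rw [Matrix.transpose_mul, Matrix.diagonal_transpose, mul_assoc, ← mul_assoc V'ᵀ, hV',
      one_mul, Matrix.diagonal_mul_diagonal]
    have : (fun i => ![1, 1, d] i * ![1, 1, d] i) = fun _ => (1:ℝ) := by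
      funext i; fin_cases i <;> simp [hdet2]
    rw [this, Matrix.diagonal_one]
  · rw [Matrix.det_mul, Matrix.det_diagonal, Fin.prod_univ_three]
    simp [hdet2]
    exact hdet2
  · intro i
    rw [Matrix.mul_diagonal]
    simp [V', hb0]

set_option maxHeartbeats 2000000 in
theorem lorentz_decomposition (L : Matrix (Fin 4) (Fin 4) ℝ) (hL : LorentzPO L) :
    ∃ (V W : Matrix (Fin 3) (Fin 3) ℝ) (α : ℝ),
      Vᵀ * V = 1 ∧ V.det = 1 ∧ Wᵀ * W = 1 ∧ W.det = 1 ∧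
      L = oplusOne V * boost α * oplusOne W := by
  obtain ⟨hLor, hdet, h00⟩ := hL
  have h00eq : L 0 0 ^ 2 - (L 1 0 ^ 2 + L 2 0 ^ 2 + L 3 0 ^ 2) = 1 := by
    have h := congrFun (congrFun hLor 0) 0
    simp [Matrix.mul_apply, η, Fin.sum_univ_four, Matrix.diagonal_apply] at h
    nlinarith [h]
  set c := L 0 0 with hc
  set r := Real.sqrt (L 1 0 ^ 2 + L 2 0 ^ 2 + L 3 0 ^ 2) with hrdef
  have hr0 : 0 ≤ r := Real.sqrt_nonneg _
  have hr2 : r ^ 2 = L 1 0 ^ 2 + L 2 0 ^ 2 + L 3 0 ^ 2 := by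
    rw [hrdef]; exact Real.sq_sqrt (by positivity)
  have hrc : r ^ 2 = c ^ 2 - 1 := by rw [hr2]; linarith [h00eq]
  set α := Real.arsinh r with hα
  have hsinh : Real.sinh α = r := Real.sinh_arsinh r
  have hcosh : Real.cosh α = c := by
    rw [hα, Real.cosh_arsinh, show 1 + r ^ 2 = c ^ 2 by linarith [hrc]]
    exact Real.sqrt_sq (by linarith)
  have s0 : ((0 : Fin 3).succ : Fin 4) = 1 := rfl
  have s1 : ((1 : Fin 3).succ : Fin 4) = 2 := rfl
  have s2 : ((2 : Fin 3).succ : Fin 4) = 3 := rfl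
  obtain ⟨V, hV1, hVdet, hVcol⟩ :
      ∃ V : Matrix (Fin 3) (Fin 3) ℝ, Vᵀ * V = 1 ∧ V.det = 1 ∧
        ∀ i : Fin 3, r * V i 0 = L i.succ 0 := by
    rcases eq_or_ne r 0 with hr | hr
    · have hsum : L 1 0 ^ 2 + L 2 0 ^ 2 + L 3 0 ^ 2 = 0 := by
        rw [← hr2, hr]; norm_num
      have hz1 : L 1 0 = 0 := by
        nlinarith [sq_nonneg (L 1 0), sq_nonneg (L 2 0), sq_nonneg (L 3 0)]
      have hz2 : L 2 0 = 0 := by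
        nlinarith [sq_nonneg (L 1 0), sq_nonneg (L 2 0), sq_nonneg (L 3 0)]
      have hz3 : L 3 0 = 0 := by
        nlinarith [sq_nonneg (L 1 0), sq_nonneg (L 2 0), sq_nonneg (L 3 0)]
      refine ⟨1, by simp, by simp, fun i => ?_⟩
      rw [hr, zero_mul]
      fin_cases i
      · exact hz1.symm
      · exact hz2.symm
      · exact hz3.symm
    · have hrpos : 0 < r := lt_of_le_of_ne hr0 (Ne.symm hr)
      obtain ⟨V, h1, h2, h3⟩ := exists_so3_col (fun i => L i.succ 0 / r) (by
        show (L (Fin.succ 0) 0 / r) ^ 2 + (L (Fin.succ 1) 0 / r) ^ 2 + (L (Fin.succ 2) 0 / r) ^ 2 = 1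
        rw [s0, s1, s2]
        field_simp
        linarith [hr2])
      refine ⟨V, h1, h2, fun i => ?_⟩
      rw [h3 i]
      field_simp
  have hVVT : V * Vᵀ = 1 := mul_eq_one_comm.mp hV1
  set N := boost (-α) * (oplusOne Vᵀ * L) with hN
  have hPcol : ∀ k : Fin 4, (oplusOne Vᵀ * L) k 0 = ![c, r, 0, 0] k := by
    intro k
    induction k using Fin.cases with
    | zero =>
      rw [Matrix.mul_apply, Fin.sum_univ_succ]
      simp [oplusOne_zero_zero, oplusOne_zero_succ]
      exact hc.symm
    | succ i =>
      rw [Matrix.mul_apply, Fin.sum_univ_succ]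
      simp only [oplusOne_succ_zero, oplusOne_succ_succ, Matrix.transpose_apply, zero_mul,
        zero_add]
      have hrw : ∀ j : Fin 3, L j.succ 0 = r * V j 0 := fun j => (hVcol j).symm
      rw [Fin.sum_univ_three, hrw 0, hrw 1, hrw 2]
      have hV10 := congrFun (congrFun hV1 i) 0
      rw [Matrix.mul_apply, Fin.sum_univ_three] at hV10
      simp only [Matrix.transpose_apply] at hV10
      fin_cases i <;> simp [Matrix.one_apply] at hV10 ⊢ <;> linear_combination r * hV10
  have hNcol : ∀ k : Fin 4, N k 0 = ![1, 0, 0, 0] k := by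
    intro k
    rw [hN, Matrix.mul_apply]
    calc (∑ m, boost (-α) k m * (oplusOne Vᵀ * L) m 0)
        = ∑ m, boost (-α) k m * ![c, r, 0, 0] m :=
          Finset.sum_congr rfl (fun m _ => by rw [hPcol m])
      _ = ![1, 0, 0, 0] k := by
          fin_cases k <;>
            simp [boost, Fin.sum_univ_four, Real.cosh_neg, Real.sinh_neg, hsinh, hcosh,
              Matrix.vecHead, Matrix.vecTail] <;> nlinarith [hrc]
  have hn0 : N 0 0 = 1 := by have := hNcol 0; simpa using this
  have hn1 : N 1 0 = 0 := by have := hNcol 1; simpa using this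
  have hn2 : N 2 0 = 0 := by have := hNcol 2; simpa using this
  have hn3 : N 3 0 = 0 := by have := hNcol 3; simpa using this
  have hNlor : Nᵀ * η * N = η := by
    rw [hN]
    exact lorentz_mul (boost_lorentz (-α)) (lorentz_mul (oplusOne_lorentz hVVT) hLor)
  have hNrow : ∀ j : Fin 3, N 0 j.succ = 0 := by
    intro j
    have h := congrFun (congrFun hNlor 0) j.succ
    have hne : (0 : Fin 4) ≠ j.succ := (Fin.succ_ne_zero j).symm
    rw [η, Matrix.diagonal_apply_ne _ hne] at h
    rw [Matrix.mul_apply] at h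
    have hexp : ∀ k : Fin 4, ((Nᵀ * Matrix.diagonal ![1, -1, -1, -1] : Matrix (Fin 4) (Fin 4) ℝ)) 0 k
        = N k 0 * ![1, -1, -1, -1] k := by
      intro k
      rw [Matrix.mul_apply]
      rw [Fin.sum_univ_four]
      fin_cases k <;>
        simp [Matrix.diagonal_apply, Matrix.transpose_apply, Matrix.vecHead, Matrix.vecTail]
    rw [Fin.sum_univ_four, hexp 0, hexp 1, hexp 2, hexp 3, hn0, hn1, hn2, hn3] at h
    simpa using h
  set W : Matrix (Fin 3) (Fin 3) ℝ := Matrix.of (fun i j => N i.succ j.succ) with hW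
  have hNW : N = oplusOne W := by
    ext i j
    induction i using Fin.cases with
    | zero =>
      induction j using Fin.cases with
      | zero => rw [oplusOne_zero_zero, hn0]
      | succ j => rw [oplusOne_zero_succ]; exact hNrow j
    | succ i =>
      induction j using Fin.cases with
      | zero =>
        rw [oplusOne_succ_zero]
        have := hNcol i.succ
        fin_cases i <;> exact hNcol _
      | succ j => rw [oplusOne_succ_succ]; rfl
  have hW1 : Wᵀ * W = 1 := by
    have h := hNlor
    rw [hNW, η_eq, oplusOne_transpose, oplusOne_mul, oplusOne_mul] at h
    have h2 := oplusOne_inj h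
    rw [mul_neg_one, Matrix.neg_mul] at h2
    exact neg_inj.mp h2
  have hWdet : W.det = 1 := by
    have hNdet : N.det = 1 := by
      rw [hN, Matrix.det_mul, Matrix.det_mul, boost_det, oplusOne_det, Matrix.det_transpose,
        hVdet, hdet]
      ring
    rwa [hNW, oplusOne_det] at hNdet
  refine ⟨V, W, α, hV1, hVdet, hW1, hWdet, ?_⟩
  have key : oplusOne V * boost α * N = L := by
    rw [hN]
    calc oplusOne V * boost α * (boost (-α) * (oplusOne Vᵀ * L))
        = oplusOne V * ((boost α * boost (-α)) * (oplusOne Vᵀ * L)) := by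
          simp only [mul_assoc]
      _ = oplusOne V * (oplusOne Vᵀ * L) := by
          rw [boost_mul, add_neg_cancel, boost_zero, one_mul]
      _ = (oplusOne V * oplusOne Vᵀ) * L := by rw [mul_assoc]
      _ = L := by rw [oplusOne_mul, hVVT, oplusOne_one, one_mul]
  rw [← key, hNW]
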